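/- arXiv:2109.11839 — 4 statements merged into one kernel-verified Lean document; each statement's English description precedes it below -/
import Mathlib

section
/- (Theorem 1, optimal anti-aliasing reconstruction) For every x ∈ ℂ^n, the vector P̄ · P · x is bandlimited, and for every bandlimited y ∈ ℂ^n (i.e., (F_n y)_k = 0 for all μ ≤ k < n − μ) one has ‖P̄ P x − x‖ ≤ ‖y − x‖, where ‖·‖ is the standard Euclidean norm on ℂ^n. In other words, F-pooling followed by inverse F-pooling minimizes the reconstruction error among all anti-aliasing downsampling-reconstruction outputs. -/
open Matrix Complex Finset

/-- The (unnormalized) DFT matrix: entries exp(-2πi·jk/n). -/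
noncomputable def dftMatrix (n : ℕ) : Matrix (Fin n) (Fin n) ℂ :=
  Matrix.of fun j k =>
    Complex.exp (-2 * (Real.pi : ℂ) * Complex.I * ((j.val : ℂ) * (k.val : ℂ)) / (n : ℂ))

/-- Selection matrix keeping the first μ and last (m−μ) coordinate rows. -/
def selD (n m μ : ℕ) : Matrix (Fin m) (Fin n) ℂ :=
  Matrix.of fun j k =>
    if (j.val < μ ∧ k.val = j.val) ∨ (μ ≤ j.val ∧ k.val = j.val + n - m) then 1 else 0

/-- Diagonal projection keeping the first μ and last μ coordinates. -/
def selL (n μ : ℕ) : Matrix (Fin n) (Fin n) ℂ :=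
  Matrix.diagonal fun k => if k.val < μ ∨ n - μ ≤ k.val then 1 else 0

/-- F-pooling matrix P = (1/n) F_m* D_μ F_n. -/
noncomputable def fpool (n m μ : ℕ) : Matrix (Fin m) (Fin n) ℂ :=
  (1 / (n : ℂ)) • ((dftMatrix m)ᴴ * selD n m μ * dftMatrix n)

/-- Inverse F-pooling matrix P̄ = (1/m) F_n* U_μ F_m with U_μ = D_μᵀ. -/
noncomputable def fpoolInv (n m μ : ℕ) : Matrix (Fin n) (Fin m) ℂ :=
  (1 / (m : ℂ)) • ((dftMatrix n)ᴴ * (selD n m μ)ᵀ * dftMatrix m)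

/-- Low-frequency component x_l = (1/n) F_n* L_μ F_n x. -/
noncomputable def lowFreq (n μ : ℕ) (x : Fin n → ℂ) : Fin n → ℂ :=
  (1 / (n : ℂ)) • ((dftMatrix n)ᴴ *ᵥ (selL n μ *ᵥ (dftMatrix n *ᵥ x)))

/-- Circular shift by t pixels: (S_t x)_k = x_{(k−t) mod n}. -/
def shift {n : ℕ} (t : ℤ) (x : Fin n → ℂ) : Fin n → ℂ :=
  fun k => x ⟨(((k.val : ℤ) - t) % (n : ℤ)).toNat, by
    have hn : (0 : ℤ) < (n : ℤ) := by exact_mod_cast k.pos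
    have h2 : ((k.val : ℤ) - t) % (n : ℤ) < (n : ℤ) := Int.emod_lt_of_pos _ hn
    have h1 : 0 ≤ ((k.val : ℤ) - t) % (n : ℤ) := Int.emod_nonneg _ (by omega)
    omega⟩

lemma dft_conjT_mul (n : ℕ) (hn : 0 < n) :
    (dftMatrix n)ᴴ * dftMatrix n = (n : ℂ) • 1 := by
  have hn0 : (n : ℂ) ≠ 0 := Nat.cast_ne_zero.mpr hn.ne'
  ext j k
  simp only [Matrix.mul_apply, Matrix.conjTranspose_apply, dftMatrix, Matrix.of_apply,
    Matrix.smul_apply, Matrix.one_apply, smul_eq_mul, Complex.star_def]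
  have key : ∀ l : Fin n, (starRingEnd ℂ) (Complex.exp (-2 * (Real.pi:ℂ) * I * ((l:ℂ) * (j:ℂ)) / n)) *
      Complex.exp (-2 * (Real.pi:ℂ) * I * ((l:ℂ) * (k:ℂ)) / n)
      = (Complex.exp (2 * (Real.pi:ℂ) * I * (((j:ℤ) - (k:ℤ) : ℤ) : ℂ) / n)) ^ (l : ℕ) := by
    intro l
    rw [← Complex.exp_conj, ← Complex.exp_nat_mul, ← Complex.exp_add]
    congr 1
    have : (starRingEnd ℂ) (-2 * (Real.pi:ℂ) * I * ((l:ℂ) * (j:ℂ)) / n)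
        = 2 * (Real.pi:ℂ) * I * ((l:ℂ) * (j:ℂ)) / n := by
      simp [map_div₀, Complex.conj_I, map_ofNat]
    rw [this]
    push_cast
    field_simp
    ring
  rw [Finset.sum_congr rfl (fun l _ => key l), Fin.sum_univ_eq_sum_range (fun l => (Complex.exp (2 * (Real.pi:ℂ) * I * (((j:ℤ) - (k:ℤ) : ℤ) : ℂ) / n)) ^ l)]
  by_cases hjk : j = k
  · subst hjk
    simp
  · rw [if_neg hjk]
    set ζ := Complex.exp (2 * (Real.pi:ℂ) * I * (((j:ℤ) - (k:ℤ) : ℤ) : ℂ) / n) with hζ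
    have hζn : ζ ^ n = 1 := by
      rw [hζ, ← Complex.exp_nat_mul]
      have : (n:ℂ) * (2 * (Real.pi:ℂ) * I * (((j:ℤ) - (k:ℤ) : ℤ) : ℂ) / n)
          = (((j:ℤ) - (k:ℤ) : ℤ) : ℂ) * (2 * (Real.pi:ℂ) * I) := by
        field_simp
      rw [this, Complex.exp_int_mul_two_pi_mul_I]
    have hζ1 : ζ ≠ 1 := by
      rw [hζ]
      intro h1
      rw [Complex.exp_eq_one_iff] at h1
      obtain ⟨t, ht⟩ := h1
      have h2pi : (2 * (Real.pi:ℂ) * I) ≠ 0 := by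
        simp [Real.pi_ne_zero, Complex.I_ne_zero, Complex.ofReal_ne_zero]
      have hint : ((j:ℕ):ℤ) - ((k:ℕ):ℤ) = t * n := by
        field_simp at ht
        push_cast at ht
        have hc : ((j:ℕ):ℂ) - ((k:ℕ):ℂ) = (t:ℂ) * n :=
          mul_left_cancel₀ h2pi (by linear_combination (2 * (Real.pi:ℂ) * I) * ht)
        exact_mod_cast hc
      have hne : (j:ℕ) ≠ (k:ℕ) := fun h => hjk (Fin.ext h)
      have hjn := j.isLt; have hkn := k.isLt
      have hj0 : (0:ℤ) ≤ ((j:ℕ):ℤ) := Int.natCast_nonneg _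
      have hk0 : (0:ℤ) ≤ ((k:ℕ):ℤ) := Int.natCast_nonneg _
      have hjn' : ((j:ℕ):ℤ) < n := by exact_mod_cast hjn
      have hkn' : ((k:ℕ):ℤ) < n := by exact_mod_cast hkn
      have hnz : (0:ℤ) < n := by exact_mod_cast hn
      rcases lt_trichotomy t 0 with h|h|h
      · have h1 : t * (n:ℤ) ≤ -1 * n :=
          mul_le_mul_of_nonneg_right (by omega) (by omega)
        linarith
      · subst h
        simp at hint
        omega
      · have h1 : 1 * (n:ℤ) ≤ t * n :=
          mul_le_mul_of_nonneg_right (by omega) (by omega)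
        linarith
    rw [geom_sum_eq hζ1, hζn]
    simp

lemma dft_mul_conjT (n : ℕ) (hn : 0 < n) :
    dftMatrix n * (dftMatrix n)ᴴ = (n : ℂ) • 1 := by
  have hn0 : (n : ℂ) ≠ 0 := Nat.cast_ne_zero.mpr hn.ne'
  have h1 : ((1/(n:ℂ)) • (dftMatrix n)ᴴ) * dftMatrix n = 1 := by
    rw [Matrix.smul_mul, dft_conjT_mul n hn, smul_smul]
    field_simp
    exact one_smul _ _
  have h2 := mul_eq_one_comm.mp h1
  calc dftMatrix n * (dftMatrix n)ᴴ
      = (n:ℂ) • (dftMatrix n * ((1/(n:ℂ)) • (dftMatrix n)ᴴ)) := by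
        rw [Matrix.mul_smul, smul_smul]; field_simp; exact (one_smul _ _).symm
    _ = (n:ℂ) • (1 : Matrix (Fin n) (Fin n) ℂ) := by rw [h2]

lemma selD_transpose_mul (n m μ : ℕ) (hmμ : m = 2 * μ) (hmn : m < n) :
    (selD n m μ)ᵀ * selD n m μ = selL n μ := by
  ext k k'
  have hkk'' : k = k' ↔ k.val = k'.val := Fin.ext_iff
  simp only [Matrix.mul_apply, Matrix.transpose_apply, selD, selL, Matrix.of_apply,
    Matrix.diagonal_apply, ite_mul, one_mul, zero_mul]
  by_cases hk : k.val < μ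
  · have hkm : k.val < m := by omega
    rw [Finset.sum_eq_single (⟨k.val, hkm⟩ : Fin m)]
    · have hP : ((⟨k.val, hkm⟩ : Fin m).val < μ ∧ k.val = (⟨k.val, hkm⟩ : Fin m).val) ∨
          (μ ≤ (⟨k.val, hkm⟩ : Fin m).val ∧ k.val = (⟨k.val, hkm⟩ : Fin m).val + n - m) :=
        Or.inl ⟨hk, rfl⟩
      rw [if_pos hP]
      by_cases hkk : k = k'
      · subst hkk
        rw [if_pos hP, if_pos rfl, if_pos (Or.inl hk)]
      · rw [if_neg hkk, if_neg]
        rintro (⟨h1, h2⟩ | ⟨h1, h2⟩) <;> simp only at h1 h2 <;>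
          exact hkk (by rw [hkk'']; omega)
    · intro j _ hj
      have hj' : j.val ≠ k.val := fun h => hj (Fin.ext h)
      rw [if_neg]
      rintro (⟨h1, h2⟩ | ⟨h1, h2⟩) <;> omega
    · simp
  · by_cases hk2 : n - μ ≤ k.val
    · have hkm : k.val - (n - m) < m := by omega
      rw [Finset.sum_eq_single (⟨k.val - (n - m), hkm⟩ : Fin m)]
      · have hP : ((⟨k.val - (n - m), hkm⟩ : Fin m).val < μ ∧
            k.val = (⟨k.val - (n - m), hkm⟩ : Fin m).val) ∨
            (μ ≤ (⟨k.val - (n - m), hkm⟩ : Fin m).val ∧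
            k.val = (⟨k.val - (n - m), hkm⟩ : Fin m).val + n - m) := Or.inr (by
          constructor <;> simp only <;> omega)
        rw [if_pos hP]
        by_cases hkk : k = k'
        · subst hkk
          rw [if_pos hP, if_pos rfl, if_pos (Or.inr hk2)]
        · rw [if_neg hkk, if_neg]
          rintro (⟨h1, h2⟩ | ⟨h1, h2⟩) <;> simp only at h1 h2 <;>
            exact hkk (by rw [hkk'']; omega)
      · intro j _ hj
        have hj' : j.val ≠ k.val - (n - m) := fun h => hj (Fin.ext (by simpa using h))
        rw [if_neg]
        rintro (⟨h1, h2⟩ | ⟨h1, h2⟩) <;> omega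
      · simp
    · have hrhs : (if k = k' then (if (k.val < μ ∨ n - μ ≤ k.val) then (1:ℂ) else 0) else 0)
          = 0 := by
        split_ifs with h1 h2
        · exact absurd h2 (by omega)
        · rfl
        · rfl
      rw [hrhs]
      apply Finset.sum_eq_zero
      intro j _
      rw [if_neg]
      rintro (⟨h1, h2⟩ | ⟨h1, h2⟩) <;> omega

lemma main_identity (n m μ : ℕ) (hn : 0 < n) (hm : 0 < m) (hmμ : m = 2 * μ) (hmn : m < n) :
    dftMatrix n * (fpoolInv n m μ * fpool n m μ) = selL n μ * dftMatrix n := by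
  have hn0 : (n : ℂ) ≠ 0 := Nat.cast_ne_zero.mpr hn.ne'
  have hm0 : (m : ℂ) ≠ 0 := Nat.cast_ne_zero.mpr hm.ne'
  have h1 : fpoolInv n m μ * fpool n m μ
      = (1 / ((m:ℂ) * n)) • ((dftMatrix n)ᴴ * (selD n m μ)ᵀ * dftMatrix m *
        ((dftMatrix m)ᴴ * selD n m μ * dftMatrix n)) := by
    rw [fpoolInv, fpool, Matrix.smul_mul, Matrix.mul_smul, smul_smul]
    congr 1
    field_simp
  have h2 : (dftMatrix n)ᴴ * (selD n m μ)ᵀ * dftMatrix m *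
      ((dftMatrix m)ᴴ * selD n m μ * dftMatrix n)
      = (m:ℂ) • ((dftMatrix n)ᴴ * (selL n μ * dftMatrix n)) := by
    calc (dftMatrix n)ᴴ * (selD n m μ)ᵀ * dftMatrix m *
        ((dftMatrix m)ᴴ * selD n m μ * dftMatrix n)
        = (dftMatrix n)ᴴ * ((selD n m μ)ᵀ * ((dftMatrix m * (dftMatrix m)ᴴ) *
            (selD n m μ * dftMatrix n))) := by
          simp only [Matrix.mul_assoc]
      _ = (m:ℂ) • ((dftMatrix n)ᴴ * ((selD n m μ)ᵀ * (selD n m μ * dftMatrix n))) := by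
          rw [dft_mul_conjT m hm, Matrix.smul_mul, Matrix.one_mul, Matrix.mul_smul,
            Matrix.mul_smul]
      _ = (m:ℂ) • ((dftMatrix n)ᴴ * (selL n μ * dftMatrix n)) := by
          rw [← Matrix.mul_assoc ((selD n m μ)ᵀ), selD_transpose_mul n m μ hmμ hmn]
  rw [h1, h2, smul_smul, Matrix.mul_smul]
  have h3 : (1 / ((m:ℂ) * n) * m) = 1 / n := by field_simp
  rw [h3, ← Matrix.mul_assoc, dft_mul_conjT n hn, Matrix.smul_mul, Matrix.one_mul,
    smul_smul, one_div, inv_mul_cancel₀ hn0, one_smul]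

lemma parseval (n : ℕ) (hn : 0 < n) (v : Fin n → ℂ) :
    ∑ k : Fin n, ‖(dftMatrix n *ᵥ v) k‖ ^ 2 = n * ∑ k : Fin n, ‖v k‖ ^ 2 := by
  have h : star (dftMatrix n *ᵥ v) ⬝ᵥ (dftMatrix n *ᵥ v) = (n:ℂ) * (star v ⬝ᵥ v) := by
    rw [Matrix.star_mulVec, ← Matrix.dotProduct_mulVec, Matrix.mulVec_mulVec,
      dft_conjT_mul n hn, Matrix.smul_mulVec, Matrix.one_mulVec]
    rw [dotProduct_smul]
    simp [smul_eq_mul]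
  have norm_dot : ∀ (w : Fin n → ℂ), (star w ⬝ᵥ w).re = ∑ k : Fin n, ‖w k‖ ^ 2 := by
    intro w
    rw [dotProduct, Complex.re_sum]
    congr 1; ext k
    rw [Pi.star_apply, Complex.star_def, mul_comm, Complex.mul_conj, Complex.ofReal_re,
      Complex.normSq_eq_norm_sq]
  have := congrArg Complex.re h
  rw [norm_dot] at this
  rw [this, Complex.mul_re]
  simp [norm_dot]

/-- Theorem 1: P̄Px is bandlimited and ‖P̄Px − x‖ ≤ ‖y − x‖ for every
bandlimited y. -/
theorem stmt_6 (n m μ : ℕ) (hn : 0 < n) (hm : 0 < m) (hmμ : m = 2 * μ) (hmn : m < n)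
    (x : Fin n → ℂ) :
    (∀ k : Fin n, μ ≤ k.val → k.val < n - μ →
      (dftMatrix n *ᵥ (fpoolInv n m μ *ᵥ (fpool n m μ *ᵥ x))) k = 0) ∧
    (∀ y : Fin n → ℂ,
      (∀ k : Fin n, μ ≤ k.val → k.val < n - μ → (dftMatrix n *ᵥ y) k = 0) →
      Real.sqrt (∑ k : Fin n, ‖(fpoolInv n m μ *ᵥ (fpool n m μ *ᵥ x)) k - x k‖ ^ 2) ≤
        Real.sqrt (∑ k : Fin n, ‖y k - x k‖ ^ 2)) := by
  set z : Fin n → ℂ := fpoolInv n m μ *ᵥ (fpool n m μ *ᵥ x) with hz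
  have key : ∀ k : Fin n, (dftMatrix n *ᵥ z) k
      = (if k.val < μ ∨ n - μ ≤ k.val then (1:ℂ) else 0) * (dftMatrix n *ᵥ x) k := by
    intro k
    have h1 : dftMatrix n *ᵥ z = (dftMatrix n * (fpoolInv n m μ * fpool n m μ)) *ᵥ x := by
      rw [hz, Matrix.mulVec_mulVec, Matrix.mulVec_mulVec, Matrix.mul_assoc]
    rw [h1, main_identity n m μ hn hm hmμ hmn, ← Matrix.mulVec_mulVec, selL,
      Matrix.mulVec_diagonal]
  constructor
  · intro k h1 h2
    rw [key k, if_neg (by omega), zero_mul]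
  · intro y hy
    apply Real.sqrt_le_sqrt
    have hpz := parseval n hn (z - x)
    have hpy := parseval n hn (y - x)
    have hterm : ∀ k : Fin n, ‖(dftMatrix n *ᵥ (z - x)) k‖ ^ 2 ≤
        ‖(dftMatrix n *ᵥ (y - x)) k‖ ^ 2 := by
      intro k
      rw [Matrix.mulVec_sub, Matrix.mulVec_sub, Pi.sub_apply, Pi.sub_apply]
      by_cases hc : k.val < μ ∨ n - μ ≤ k.val
      · rw [key k, if_pos hc, one_mul, sub_self]
        have : (0:ℝ) ≤ ‖(dftMatrix n *ᵥ (y - x)) k‖ ^ 2 := sq_nonneg _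
        simpa using this
      · rw [key k, if_neg hc, zero_mul, zero_sub, hy k (by omega) (by omega), zero_sub,
          norm_neg]
    have hle : ∑ k : Fin n, ‖(dftMatrix n *ᵥ (z - x)) k‖ ^ 2 ≤
        ∑ k : Fin n, ‖(dftMatrix n *ᵥ (y - x)) k‖ ^ 2 :=
      Finset.sum_le_sum fun k _ => hterm k
    rw [hpz, hpy] at hle
    have hn' : (0:ℝ) < n := by exact_mod_cast hn
    have := le_of_mul_le_mul_left hle hn'
    simpa [Pi.sub_apply] using this
end

section
/- (Theorem 2, F-pooling is shift-equivalent) For every x ∈ ℂ^n and every t ∈ ℤ, P̄ · P · (S_t x) = S_t (P̄ · P · x). -/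
open Matrix Complex Finset

section Aux

lemma expo_sum (N : ℕ) (hN : 0 < N) (d : ℤ) :
    ∑ a : Fin N, Complex.exp (2 * (Real.pi : ℂ) * Complex.I * a * d / N) =
      if (N : ℤ) ∣ d then (N : ℂ) else 0 := by
  have hNC : (N : ℂ) ≠ 0 := Nat.cast_ne_zero.mpr hN.ne'
  set ζ : ℂ := Complex.exp (2 * (Real.pi : ℂ) * Complex.I * d / N) with hζ
  have hpow : ∀ a : ℕ, Complex.exp (2 * (Real.pi : ℂ) * Complex.I * a * d / N) = ζ ^ a := by
    intro a
    rw [hζ, ← Complex.exp_nat_mul]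
    ring_nf
  have hsum : ∑ a : Fin N, Complex.exp (2 * (Real.pi : ℂ) * Complex.I * a * d / N)
      = ∑ a ∈ Finset.range N, ζ ^ a := by
    rw [Finset.sum_range fun a => ζ ^ a]
    exact Finset.sum_congr rfl fun a _ => hpow a
  rw [hsum]
  by_cases hdvd : (N : ℤ) ∣ d
  · have hζ1 : ζ = 1 := by
      obtain ⟨c, rfl⟩ := hdvd
      rw [hζ]
      have : 2 * (Real.pi : ℂ) * Complex.I * (((N : ℤ) * c : ℤ) : ℂ) / N = (c : ℤ) * (2 * Real.pi * Complex.I) := by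
        push_cast
        field_simp
      rw [this, Complex.exp_int_mul_two_pi_mul_I]
    simp [hζ1, hdvd]
  · have hζne : ζ ≠ 1 := by
      intro h
      rw [hζ, Complex.exp_eq_one_iff] at h
      obtain ⟨c, hc⟩ := h
      apply hdvd
      refine ⟨c, ?_⟩
      have hpi : (Real.pi : ℂ) ≠ 0 := Complex.ofReal_ne_zero.mpr Real.pi_ne_zero
      have hI := Complex.I_ne_zero
      field_simp at hc
      have : (d : ℂ) = (N : ℂ) * c := by
        have h2 : (2 : ℂ) ≠ 0 := two_ne_zero
        apply mul_left_cancel₀ (mul_ne_zero (mul_ne_zero h2 hpi) hI)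
        ring_nf
        ring_nf at hc
        linear_combination (2 * (Real.pi : ℂ) * Complex.I) * hc
      exact_mod_cast this
    have hζN : ζ ^ N = 1 := by
      rw [hζ, ← Complex.exp_nat_mul]
      have : (N : ℂ) * (2 * (Real.pi : ℂ) * Complex.I * d / N) = (d : ℤ) * (2 * Real.pi * Complex.I) := by
        field_simp
      rw [this, Complex.exp_int_mul_two_pi_mul_I]
    rw [geom_sum_eq hζne, hζN]
    simp [hdvd]

lemma dft_mul_conjT_s11 (N : ℕ) (hN : 0 < N) :
    dftMatrix N * (dftMatrix N)ᴴ = (N : ℂ) • 1 := by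
  ext j l
  rw [Matrix.mul_apply]
  have : ∀ a : Fin N, dftMatrix N j a * (dftMatrix N)ᴴ a l
      = Complex.exp (2 * (Real.pi : ℂ) * Complex.I * a * (((l : ℤ) - (j : ℤ)) : ℤ) / N) := by
    intro a
    rw [Matrix.conjTranspose_apply]
    simp only [dftMatrix, Matrix.of_apply, RCLike.star_def, ← Complex.exp_conj]
    rw [← Complex.exp_add]
    congr 1
    rw [map_div₀]
    simp only [_root_.map_mul, map_neg, map_ofNat, Complex.conj_I, Complex.conj_natCast,
      Complex.conj_ofReal]
    push_cast
    ring
  rw [Finset.sum_congr rfl fun a _ => this a, expo_sum N hN]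
  have hlj : ((N:ℤ) ∣ (l : ℤ) - (j : ℤ)) ↔ j = l := by
    constructor
    · intro h
      have h1 := l.isLt; have h2 := j.isLt
      have h0 : (l : ℤ) - (j : ℤ) = 0 := Int.eq_zero_of_abs_lt_dvd h (by rw [abs_lt]; omega)
      have : (l : ℤ) = (j : ℤ) := by omega
      exact (Fin.ext (by exact_mod_cast this)).symm
    · rintro rfl; simp
  by_cases h : j = l <;> simp [h, hlj, Matrix.one_apply, Fin.ext_iff] at * <;> simp [hlj, h]

lemma selD_transpose_mul_selD (n m μ : ℕ) (hm : 0 < m) (hmμ : m = 2 * μ) (hmn : m < n) :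
    (selD n m μ)ᵀ * selD n m μ = selL n μ := by
  have hμ : 0 < μ := by omega
  ext k k'
  rw [Matrix.mul_apply]
  -- each entry of selD as an indicator of j = j₀(k)
  have hent : ∀ (j : Fin m) (k : Fin n), selD n m μ j k =
      if (k.val < μ ∨ n - μ ≤ k.val) ∧ j.val = (if k.val < μ then k.val else k.val + m - n)
      then 1 else 0 := by
    intro j k
    simp only [selD, Matrix.of_apply]
    congr 1
    rw [eq_iff_iff]
    have hj := j.isLt; have hk := k.isLt
    by_cases h1 : k.val < μ
    · rw [if_pos h1]; constructor <;> (intro h; omega)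
    · rw [if_neg h1]; constructor <;> (intro h; omega)
  simp only [Matrix.transpose_apply, hent]
  by_cases hsel : (k.val < μ ∨ n - μ ≤ k.val)
  · set j0 : ℕ := if k.val < μ then k.val else k.val + m - n with hj0
    have hj0lt : j0 < m := by have := k.isLt; by_cases h1 : k.val < μ <;> simp [hj0, h1] <;> omega
    by_cases hkk : k = k'
    · subst hkk
      have hterm : ∀ j : Fin m,
          (if (k.val < μ ∨ n - μ ≤ k.val) ∧ j.val = (if k.val < μ then k.val else k.val + m - n) then (1:ℂ) else 0) *
          (if (k.val < μ ∨ n - μ ≤ k.val) ∧ j.val = (if k.val < μ then k.val else k.val + m - n) then (1:ℂ) else 0)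
          = if j = ⟨j0, hj0lt⟩ then 1 else 0 := by
        intro j
        by_cases h : (k.val < μ ∨ n - μ ≤ k.val) ∧ j.val = (if k.val < μ then k.val else k.val + m - n)
        · rw [if_pos h, if_pos (Fin.ext h.2), one_mul]
        · rw [if_neg h, zero_mul, if_neg (fun hc => h ⟨hsel, by rw [hc]⟩)]
      rw [Finset.sum_congr rfl (fun j _ => hterm j), Finset.sum_ite_eq' Finset.univ _ (fun _ => (1:ℂ)),
        if_pos (Finset.mem_univ _)]
      rw [selL, Matrix.diagonal_apply_eq, if_pos hsel]
    · have : ∀ j : Fin m, (if (k.val < μ ∨ n - μ ≤ k.val) ∧ j.val = (if k.val < μ then k.val else k.val + m - n) then (1:ℂ) else 0) *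
          (if (k'.val < μ ∨ n - μ ≤ k'.val) ∧ j.val = (if k'.val < μ then k'.val else k'.val + m - n) then 1 else 0) = 0 := by
        intro j
        rw [mul_eq_zero]
        by_cases hA : ((k.val < μ ∨ n - μ ≤ k.val) ∧ j.val = (if k.val < μ then k.val else k.val + m - n))
        · right
          rw [if_neg]
          rintro ⟨hs', he'⟩
          apply hkk
          have hk := k.isLt; have hk' := k'.isLt
          have he := hA.2
          apply Fin.ext
          by_cases h1 : k.val < μ <;> by_cases h2 : k'.val < μ <;> simp [h1, h2] at he he' <;> omega
        · left; rw [if_neg hA]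
      rw [Finset.sum_congr rfl (fun j _ => this j), Finset.sum_const_zero]
      rw [selL, Matrix.diagonal_apply_ne _ (fun h => hkk h)]
  · rw [Finset.sum_congr rfl (fun j _ => by rw [if_neg (fun h => hsel h.1), zero_mul]),
      Finset.sum_const_zero]
    by_cases hkk : k = k'
    · subst hkk; rw [selL, Matrix.diagonal_apply_eq, if_neg hsel]
    · rw [selL, Matrix.diagonal_apply_ne _ (fun h => hkk h)]

lemma fpoolInv_mul_fpool (n m μ : ℕ) (hn : 0 < n) (hm : 0 < m) (hmμ : m = 2 * μ) (hmn : m < n) :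
    fpoolInv n m μ * fpool n m μ = (1 / (n : ℂ)) • ((dftMatrix n)ᴴ * selL n μ * dftMatrix n) := by
  have hmC : (m : ℂ) ≠ 0 := Nat.cast_ne_zero.mpr hm.ne'
  rw [fpoolInv, fpool, Matrix.smul_mul, Matrix.mul_smul, smul_smul]
  have : ((dftMatrix n)ᴴ * (selD n m μ)ᵀ * dftMatrix m) * ((dftMatrix m)ᴴ * selD n m μ * dftMatrix n)
      = (m : ℂ) • ((dftMatrix n)ᴴ * selL n μ * dftMatrix n) := by
    calc ((dftMatrix n)ᴴ * (selD n m μ)ᵀ * dftMatrix m) * ((dftMatrix m)ᴴ * selD n m μ * dftMatrix n)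
        = (dftMatrix n)ᴴ * (selD n m μ)ᵀ * (dftMatrix m * (dftMatrix m)ᴴ) * (selD n m μ * dftMatrix n) := by
          simp only [Matrix.mul_assoc]
      _ = (m : ℂ) • ((dftMatrix n)ᴴ * selL n μ * dftMatrix n) := by
          rw [dft_mul_conjT_s11 m hm, Matrix.mul_smul, Matrix.smul_mul, Matrix.mul_one]
          rw [← selD_transpose_mul_selD n m μ hm hmμ hmn]
          simp only [Matrix.mul_assoc]
  rw [this, smul_smul]
  congr 1
  rw [mul_comm ((1:ℂ)/m) ((1:ℂ)/n), mul_assoc, one_div (m:ℂ), inv_mul_cancel₀ hmC, mul_one]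

def idx (n : ℕ) (hn : 0 < n) (t : ℤ) (k : Fin n) : Fin n :=
  ⟨(((k.val : ℤ) - t) % (n : ℤ)).toNat, by
    have hn' : (0 : ℤ) < (n : ℤ) := by exact_mod_cast hn
    have h2 : ((k.val : ℤ) - t) % (n : ℤ) < (n : ℤ) := Int.emod_lt_of_pos _ hn'
    have h1 : 0 ≤ ((k.val : ℤ) - t) % (n : ℤ) := Int.emod_nonneg _ (by omega)
    omega⟩

lemma shift_apply {n : ℕ} (hn : 0 < n) (t : ℤ) (x : Fin n → ℂ) (k : Fin n) :
    shift t x k = x (idx n hn t k) := rfl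

lemma idx_val (n : ℕ) (hn : 0 < n) (t : ℤ) (k : Fin n) :
    ((idx n hn t k : Fin n) : ℤ) = ((k.val : ℤ) - t) % (n : ℤ) := by
  have hn' : (0 : ℤ) < (n : ℤ) := by exact_mod_cast hn
  simp only [idx]
  exact Int.toNat_of_nonneg (Int.emod_nonneg _ (by omega))

def shiftEquiv' (n : ℕ) (hn : 0 < n) (t : ℤ) : Fin n ≃ Fin n where
  toFun := idx n hn t
  invFun := idx n hn (-t)
  left_inv := by
    intro k
    have hn' : (0 : ℤ) < (n : ℤ) := by exact_mod_cast hn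
    apply Fin.ext
    have h1 : ((idx n hn (-t) (idx n hn t k) : Fin n) : ℤ) = (k : ℤ) := by
      rw [idx_val, idx_val, sub_neg_eq_add, Int.emod_add_emod, sub_add_cancel,
        Int.emod_eq_of_lt (by exact_mod_cast Nat.zero_le _) (by exact_mod_cast k.isLt)]
    exact_mod_cast h1
  right_inv := by
    intro k
    have hn' : (0 : ℤ) < (n : ℤ) := by exact_mod_cast hn
    apply Fin.ext
    have h1 : ((idx n hn t (idx n hn (-t) k) : Fin n) : ℤ) = (k : ℤ) := by
      rw [idx_val, idx_val, sub_neg_eq_add]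
      have step : (((k:ℤ) + t) % n - t) % n = ((k:ℤ) + t - t) % n := by
        conv_rhs => rw [Int.sub_emod]
        conv_lhs => rw [Int.sub_emod, Int.emod_emod_of_dvd _ dvd_rfl]
      rw [step, show (k:ℤ) + t - t = (k:ℤ) by ring,
        Int.emod_eq_of_lt (by exact_mod_cast Nat.zero_le _) (by exact_mod_cast k.isLt)]
    exact_mod_cast h1

lemma exp_period (n : ℕ) (hn : 0 < n) (d d' : ℤ) (h : (n : ℤ) ∣ (d - d')) :
    Complex.exp (2 * (Real.pi : ℂ) * Complex.I * (d : ℂ) / n)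
      = Complex.exp (2 * (Real.pi : ℂ) * Complex.I * (d' : ℂ) / n) := by
  obtain ⟨c, hc⟩ := h
  have hd : (d : ℂ) = (d' : ℂ) + (n : ℂ) * c := by
    have : d = d' + n * c := by omega
    exact_mod_cast congrArg (fun z : ℤ => (z : ℂ)) this
  have hnC : (n : ℂ) ≠ 0 := Nat.cast_ne_zero.mpr hn.ne'
  rw [hd]
  have : 2 * (Real.pi : ℂ) * Complex.I * ((d' : ℂ) + (n : ℂ) * c) / n
      = 2 * (Real.pi : ℂ) * Complex.I * (d' : ℂ) / n + (c : ℤ) * (2 * Real.pi * Complex.I) := by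
    field_simp
  rw [this, Complex.exp_add, Complex.exp_int_mul_two_pi_mul_I, mul_one]

lemma mm_apply (n μ : ℕ) (k l : Fin n) :
    ((dftMatrix n)ᴴ * selL n μ * dftMatrix n) k l
      = ∑ j : Fin n, (if j.val < μ ∨ n - μ ≤ j.val then (1:ℂ) else 0) *
          Complex.exp (2 * (Real.pi : ℂ) * Complex.I * (((j.val : ℤ) * ((k.val : ℤ) - (l.val : ℤ)) : ℤ) : ℂ) / n) := by
  rw [Matrix.mul_assoc, Matrix.mul_apply]
  refine Finset.sum_congr rfl fun j _ => ?_
  rw [selL, Matrix.diagonal_mul, Matrix.conjTranspose_apply]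
  simp only [dftMatrix, Matrix.of_apply, RCLike.star_def]
  rw [← Complex.exp_conj, mul_comm (Complex.exp _) _, mul_assoc, ← Complex.exp_add]
  congr 1
  rw [map_div₀]
  simp only [_root_.map_mul, map_neg, map_ofNat, Complex.conj_I, Complex.conj_natCast,
    Complex.conj_ofReal]
  push_cast
  ring

lemma mm_shift_inv (n μ : ℕ) (hn : 0 < n) (k l k' l' : Fin n)
    (h : (n : ℤ) ∣ (((k.val : ℤ) - l.val) - ((k'.val : ℤ) - l'.val))) :
    ((dftMatrix n)ᴴ * selL n μ * dftMatrix n) k l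
      = ((dftMatrix n)ᴴ * selL n μ * dftMatrix n) k' l' := by
  rw [mm_apply, mm_apply]
  refine Finset.sum_congr rfl fun j _ => ?_
  congr 1
  apply exp_period n hn
  have : (j.val : ℤ) * ((k.val : ℤ) - l.val) - (j.val : ℤ) * ((k'.val : ℤ) - l'.val)
      = (j.val : ℤ) * (((k.val : ℤ) - l.val) - ((k'.val : ℤ) - l'.val)) := by ring
  rw [this]
  exact Dvd.dvd.mul_left h _

lemma mm_commutes_shift (n μ : ℕ) (hn : 0 < n) (t : ℤ) (x : Fin n → ℂ) :
    ((dftMatrix n)ᴴ * selL n μ * dftMatrix n) *ᵥ shift t x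
      = shift t (((dftMatrix n)ᴴ * selL n μ * dftMatrix n) *ᵥ x) := by
  funext k
  rw [shift_apply hn, Matrix.mulVec, Matrix.mulVec, dotProduct, dotProduct]
  refine Fintype.sum_equiv (shiftEquiv' n hn t)
    (fun l => ((dftMatrix n)ᴴ * selL n μ * dftMatrix n) k l * shift t x l)
    (fun l => ((dftMatrix n)ᴴ * selL n μ * dftMatrix n) (idx n hn t k) l * x l) ?_
  intro l
  dsimp only [shiftEquiv', Equiv.coe_fn_mk]
  rw [shift_apply hn]
  congr 1
  apply mm_shift_inv n μ hn
  rw [idx_val, idx_val]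
  have h1 : ((k.val : ℤ) - t) % n ≡ (k.val : ℤ) - t [ZMOD n] := Int.emod_emod_of_dvd _ dvd_rfl
  have h2 : ((l.val : ℤ) - t) % n ≡ (l.val : ℤ) - t [ZMOD n] := Int.emod_emod_of_dvd _ dvd_rfl
  have h3 := h1.sub h2
  have h4 : ((k.val : ℤ) - t) - ((l.val : ℤ) - t) = (k.val : ℤ) - l.val := by ring
  rw [h4] at h3
  exact h3.dvd

end Aux

/-- Theorem 2: F-pooling is shift-equivalent: P̄P(S_t x) = S_t(P̄Px). -/
theorem stmt_11 (n m μ : ℕ) (hn : 0 < n) (hm : 0 < m) (hmμ : m = 2 * μ) (hmn : m < n)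
    (x : Fin n → ℂ) (t : ℤ) :
    fpoolInv n m μ *ᵥ (fpool n m μ *ᵥ shift t x) =
      shift t (fpoolInv n m μ *ᵥ (fpool n m μ *ᵥ x)) := by
  rw [Matrix.mulVec_mulVec, Matrix.mulVec_mulVec, fpoolInv_mul_fpool n m μ hn hm hmμ hmn,
    Matrix.smul_mulVec, Matrix.smul_mulVec, mm_commutes_shift n μ hn t x]
  funext k
  rfl
end

section
/- (Odd output size gives real output) Let n, m be positive integers with m odd, m = 2μ − 1, and m < n. Let D ∈ ℂ^{m×n} be the selection matrix with D_{jk} = 1 if (j < μ and k = j) or (μ ≤ j < m and k = j + n − m), and 0 otherwise (selecting the frequencies 0, …, μ−1 and n−μ+1, …, n−1). Define the F-pooling matrix P = (1/n) F_m* D F_n ∈ ℂ^{m×n}. Then for every real-valued input x ∈ ℝ^n, every entry of P x ∈ ℂ^m has zero imaginary part. -/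
open Matrix Complex Finset

/-- Normalized exponential `exp(2πi t / N)`. -/
noncomputable def ee (N : ℕ) (t : ℤ) : ℂ :=
  Complex.exp (2 * (Real.pi : ℂ) * Complex.I * (t : ℂ) / (N : ℂ))

lemma ee_conj (N : ℕ) (t : ℤ) : (starRingEnd ℂ) (ee N t) = ee N (-t) := by
  unfold ee
  rw [← Complex.exp_conj]
  congr 1
  simp only [map_div₀, _root_.map_mul, Complex.conj_I, map_ofNat, Complex.conj_ofReal,
    map_intCast, map_natCast]
  push_cast
  ring

lemma ee_star (N : ℕ) (t : ℤ) : star (ee N t) = ee N (-t) := ee_conj N t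

lemma ee_add_mul (N : ℕ) (hN : N ≠ 0) (t s : ℤ) : ee N (t + N * s) = ee N t := by
  unfold ee
  have hN' : (N : ℂ) ≠ 0 := Nat.cast_ne_zero.mpr hN
  rw [show (2 * (Real.pi:ℂ) * Complex.I * ((t + N*s : ℤ) : ℂ) / N)
      = 2 * (Real.pi:ℂ) * Complex.I * t / N + s * (2 * Real.pi * Complex.I) by
    push_cast; field_simp]
  rw [Complex.exp_add, Complex.exp_int_mul_two_pi_mul_I, mul_one]

lemma ee_congr (N : ℕ) (hN : N ≠ 0) {t₁ t₂ : ℤ} (h : t₁ ≡ t₂ [ZMOD N]) :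
    ee N t₁ = ee N t₂ := by
  obtain ⟨s, hs⟩ := h.dvd
  have : t₂ = t₁ + N * s := by linarith
  rw [this, ee_add_mul N hN]

lemma dft_apply (N : ℕ) (j k : Fin N) : dftMatrix N j k = ee N (-(j.val * k.val)) := by
  unfold dftMatrix ee
  simp only [Matrix.of_apply]
  congr 1
  push_cast
  ring

/-- Negation mod N on `Fin N`. -/
def negF {N : ℕ} (hN : 0 < N) (a : Fin N) : Fin N := ⟨(N - a.val) % N, Nat.mod_lt _ hN⟩

lemma negF_val {N : ℕ} (hN : 0 < N) (a : Fin N) :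
    (negF hN a).val = if a.val = 0 then 0 else N - a.val := by
  unfold negF
  simp only
  rcases Nat.eq_zero_or_pos a.val with h | h
  · simp [h]
  · rw [if_neg h.ne', Nat.mod_eq_of_lt (by have := a.isLt; omega)]

lemma negF_negF {N : ℕ} (hN : 0 < N) (a : Fin N) : negF hN (negF hN a) = a := by
  apply Fin.ext
  rw [negF_val, negF_val]
  have := a.isLt
  split <;> split <;> omega

lemma negF_mod {N : ℕ} (hN : 0 < N) (a : Fin N) :
    ((negF hN a).val : ℤ) ≡ -(a.val : ℤ) [ZMOD (N : ℤ)] := by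
  rw [negF_val]
  have := a.isLt
  split
  · simp_all
  · have h1 : (((N - a.val : ℕ)) : ℤ) = (N : ℤ) - a.val := by
      push_cast [Nat.cast_sub this.le]; ring
    rw [h1]
    calc (N : ℤ) - a.val ≡ 0 - a.val [ZMOD (N:ℤ)] :=
          Int.ModEq.sub (Int.modEq_zero_iff_dvd.mpr dvd_rfl) (Int.ModEq.refl _)
      _ = -(a.val : ℤ) := by ring

/-- The index-selection map corresponding to `selD`. -/
def sigma (n m μ : ℕ) (hmn : m ≤ n) (a : Fin m) : Fin n :=
  ⟨if a.val < μ then a.val else a.val + n - m, by have := a.isLt; split <;> omega⟩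

lemma sigma_val (n m μ : ℕ) (hmn : m ≤ n) (a : Fin m) :
    (sigma n m μ hmn a).val = if a.val < μ then a.val else a.val + n - m := rfl

lemma selD_mulVec (n m μ : ℕ) (hmn : m ≤ n) (X : Fin n → ℂ) (a : Fin m) :
    (selD n m μ *ᵥ X) a = X (sigma n m μ hmn a) := by
  have ham := a.isLt
  rw [Matrix.mulVec]
  show (∑ b, selD n m μ a b * X b) = _
  rw [Finset.sum_eq_single (sigma n m μ hmn a)]
  · rw [show selD n m μ a (sigma n m μ hmn a) = 1 by
      unfold selD sigma
      simp only [Matrix.of_apply]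
      rw [if_pos]
      rcases lt_or_ge a.val μ with h | h
      · exact Or.inl ⟨h, by simp [h]⟩
      · exact Or.inr ⟨h, by simp [Nat.not_lt.mpr h]⟩]
    ring
  · intro b _ hb
    rw [show selD n m μ a b = 0 by
      unfold selD
      simp only [Matrix.of_apply]
      rw [if_neg]
      intro h
      apply hb
      apply Fin.ext
      unfold sigma
      simp only
      rcases h with ⟨h1, h2⟩ | ⟨h1, h2⟩ <;> split <;> omega]
    ring
  · intro h; exact absurd (Finset.mem_univ _) h

/-- with odd output size m = 2μ − 1, the F-pooled output of a real input
is real (zero imaginary part in every entry). -/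
theorem stmt_15 (n m μ : ℕ) (hn : 0 < n) (hm : 0 < m) (hμ : 0 < μ) (hmμ : m = 2 * μ - 1)
    (hmn : m < n) (x : Fin n → ℝ) (k : Fin m) :
    ((((1 / (n : ℂ)) • ((dftMatrix m)ᴴ * selD n m μ * dftMatrix n)) *ᵥ
        fun j : Fin n => (x j : ℂ)) k).im = 0 := by
  have hmn' : m ≤ n := hmn.le
  have hn0 : n ≠ 0 := hn.ne'
  have hm0 : m ≠ 0 := hm.ne'
  rw [← Complex.conj_eq_iff_im]
  set v : Fin n → ℂ := fun j => (x j : ℂ) with hv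
  rw [Matrix.smul_mulVec, Pi.smul_apply, ← Matrix.mulVec_mulVec,
    ← Matrix.mulVec_mulVec]
  set X : Fin n → ℂ := dftMatrix n *ᵥ v with hX
  -- conjugation of the inner transform
  have hXc : ∀ b : Fin n, (starRingEnd ℂ) (X b) = X (negF hn b) := by
    intro b
    rw [hX, Matrix.mulVec, Matrix.mulVec]
    show (starRingEnd ℂ) (∑ j, dftMatrix n b j * v j) = ∑ j, dftMatrix n (negF hn b) j * v j
    rw [map_sum]
    refine Finset.sum_congr rfl fun j _ => ?_
    rw [_root_.map_mul, hv]
    simp only [Complex.conj_ofReal]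
    congr 1
    rw [dft_apply, dft_apply, ee_conj, neg_neg]
    refine ee_congr n hn0 ?_
    have h1 := ((negF_mod hn b).mul (Int.ModEq.refl (j.val : ℤ))).neg
    rw [neg_mul, neg_neg] at h1
    exact h1.symm
  -- the k entry as an explicit sum
  have hEntry : ((dftMatrix m)ᴴ *ᵥ (selD n m μ *ᵥ X)) k
      = ∑ a : Fin m, ee m ((a.val : ℤ) * k.val) * X (sigma n m μ hmn' a) := by
    rw [Matrix.mulVec]
    show (∑ a, (dftMatrix m)ᴴ k a * (selD n m μ *ᵥ X) a) = _
    refine Finset.sum_congr rfl fun a _ => ?_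
    rw [Matrix.conjTranspose_apply, selD_mulVec n m μ hmn', dft_apply, ee_star, neg_neg]
  rw [hEntry]
  rw [smul_eq_mul, _root_.map_mul]
  have hcn : (starRingEnd ℂ) (1 / (n : ℂ)) = 1 / (n : ℂ) := by simp
  rw [hcn, map_sum]
  congr 1
  let e : Fin m ≃ Fin m := ⟨negF hm, negF hm, negF_negF hm, negF_negF hm⟩
  refine Fintype.sum_equiv e _ _ fun a => ?_
  show (starRingEnd ℂ) (ee m ((a.val : ℤ) * k.val) * X (sigma n m μ hmn' a))
      = ee m (((negF hm a).val : ℤ) * k.val) * X (sigma n m μ hmn' (negF hm a))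
  rw [_root_.map_mul, ee_conj, hXc]
  congr 1
  · refine ee_congr m hm0 ?_
    have h1 := (negF_mod hm a).mul (Int.ModEq.refl (k.val : ℤ))
    rw [neg_mul] at h1
    exact h1.symm
  · congr 1
    apply Fin.ext
    have ham := a.isLt
    rw [negF_val, sigma_val, sigma_val, negF_val]
    split_ifs <;> omega
end

section
/- (2D F-pooling is shift-equivalent) For every matrix X ∈ ℂ^{n×n} and all t₁, t₂ ∈ ℤ, let S_{t₁,t₂} denote the 2D circular shift defined by (S_{t₁,t₂} X)_{jk} = X_{(j−t₁) mod n, (k−t₂) mod n}. Then P̄ · P · (S_{t₁,t₂} X) · Pᵀ · P̄ᵀ = S_{t₁,t₂} (P̄ · P · X · Pᵀ · P̄ᵀ), where 2D F-pooling of X is defined as P X Pᵀ and 2D inverse F-pooling of Y ∈ ℂ^{m×m} as P̄ Y P̄ᵀ. -/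
open Matrix Complex Finset

/-- 2D circular shift: (S_{t₁,t₂} X)_{jk} = X_{(j−t₁) mod n, (k−t₂) mod n}. -/
def shift2 {n : ℕ} (t₁ t₂ : ℤ) (X : Matrix (Fin n) (Fin n) ℂ) : Matrix (Fin n) (Fin n) ℂ :=
  Matrix.of fun j k =>
    X ⟨(((j.val : ℤ) - t₁) % (n : ℤ)).toNat, by
        have hn : (0 : ℤ) < (n : ℤ) := by exact_mod_cast j.pos
        have h2 : ((j.val : ℤ) - t₁) % (n : ℤ) < (n : ℤ) := Int.emod_lt_of_pos _ hn
        have h1 : 0 ≤ ((j.val : ℤ) - t₁) % (n : ℤ) := Int.emod_nonneg _ (by omega)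
        omega⟩
      ⟨(((k.val : ℤ) - t₂) % (n : ℤ)).toNat, by
        have hn : (0 : ℤ) < (n : ℤ) := by exact_mod_cast k.pos
        have h2 : ((k.val : ℤ) - t₂) % (n : ℤ) < (n : ℤ) := Int.emod_lt_of_pos _ hn
        have h1 : 0 ≤ ((k.val : ℤ) - t₂) % (n : ℤ) := Int.emod_nonneg _ (by omega)
        omega⟩


section Aux

open Matrix Complex Finset

private lemma idx_eq' (n j r : ℕ) (t : ℤ) (hj : j < n) (hr : r < n)
    (h1 : t % (n:ℤ) = (r:ℤ)) : (((j:ℤ) - t) % (n:ℤ)).toNat = (n - r + j) % n := by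
  have e1 : ((j:ℤ) - t) % n = ((j:ℤ) - r) % n := by
    have hrn : (r:ℤ) % n = r := Int.emod_eq_of_lt (by omega) (by omega)
    rw [Int.sub_emod, h1]
    conv_rhs => rw [Int.sub_emod, hrn]
  rcases le_or_gt r j with h | h
  · have e2 : ((j:ℤ) - r) % n = (j:ℤ) - r :=
      Int.emod_eq_of_lt (by omega) (by omega)
    have e3 : (n - r + j) % n = j - r := by
      have : n - r + j = (j - r) + n := by omega
      rw [this, Nat.add_mod_right, Nat.mod_eq_of_lt (by omega)]
    omega
  · have e2 : ((j:ℤ) - r) % n = (j:ℤ) - r + n := by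
      have h' : ((j:ℤ) - r) % n = ((j:ℤ) - r + n) % n := by
        rw [Int.add_emod_right]
      rw [h', Int.emod_eq_of_lt (by omega) (by omega)]
    have e3 : (n - r + j) % n = n - r + j := Nat.mod_eq_of_lt (by omega)
    omega

private lemma dft_mul_conjT_s17 (m : ℕ) (hm : 0 < m) :
    dftMatrix m * (dftMatrix m)ᴴ = (m:ℂ) • (1 : Matrix (Fin m) (Fin m) ℂ) := by
  have hm' : (m:ℂ) ≠ 0 := Nat.cast_ne_zero.2 hm.ne'
  ext j k
  simp only [Matrix.mul_apply, Matrix.conjTranspose_apply, dftMatrix, Matrix.of_apply,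
    Matrix.smul_apply, Matrix.one_apply, smul_eq_mul, RCLike.star_def]
  have hterm : ∀ a : Fin m,
      Complex.exp (-2 * (Real.pi : ℂ) * Complex.I * ((j.val : ℂ) * (a.val : ℂ)) / (m : ℂ)) *
        (starRingEnd ℂ) (Complex.exp (-2 * (Real.pi : ℂ) * Complex.I * ((k.val : ℂ) * (a.val : ℂ)) / (m : ℂ)))
      = Complex.exp ((a.val : ℂ) * (2 * (Real.pi : ℂ) * Complex.I * ((k.val : ℂ) - (j.val : ℂ)) / (m : ℂ))) := by
    intro a
    rw [← Complex.exp_conj, ← Complex.exp_add]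
    congr 1
    simp only [map_div₀, _root_.map_mul, map_neg, map_ofNat, Complex.conj_I,
      Complex.conj_ofReal, map_natCast]
    field_simp
    ring
  rw [Finset.sum_congr rfl (fun a _ => hterm a)]
  have hsum : ∑ a : Fin m, Complex.exp ((a.val : ℂ) * (2 * (Real.pi : ℂ) * Complex.I * ((k.val : ℂ) - (j.val : ℂ)) / (m : ℂ)))
      = ∑ a ∈ Finset.range m, (Complex.exp (2 * (Real.pi : ℂ) * Complex.I * ((k.val : ℂ) - (j.val : ℂ)) / (m : ℂ))) ^ a := by
    rw [Fin.sum_univ_eq_sum_range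
      (fun a => Complex.exp ((a : ℂ) * (2 * (Real.pi : ℂ) * Complex.I * ((k.val : ℂ) - (j.val : ℂ)) / (m : ℂ)))) m]
    exact Finset.sum_congr rfl fun a _ => by rw [← Complex.exp_nat_mul]
  rw [hsum]
  by_cases hjk : j = k
  · subst hjk
    simp
  · rw [if_neg hjk]
    set z := Complex.exp (2 * (Real.pi : ℂ) * Complex.I * ((k.val : ℂ) - (j.val : ℂ)) / (m : ℂ)) with hz
    have hπ : (2 * (Real.pi:ℂ) * Complex.I) ≠ 0 := by
      simp [Real.pi_ne_zero, Complex.I_ne_zero, Complex.ofReal_ne_zero]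
    have hz1 : z ≠ 1 := by
      intro h
      rw [hz, Complex.exp_eq_one_iff] at h
      obtain ⟨N, hN⟩ := h
      have h2 : ((k.val:ℂ) - (j.val:ℂ)) = N * m := by
        have h3 : (2 * (Real.pi:ℂ) * Complex.I) * ((k.val:ℂ) - (j.val:ℂ))
            = (2 * (Real.pi:ℂ) * Complex.I) * ((N:ℂ) * m) := by
          field_simp at hN
          linear_combination (2 * (Real.pi:ℂ) * Complex.I) * hN
        exact mul_left_cancel₀ hπ h3
      have h4 : (k.val:ℤ) - (j.val:ℤ) = N * m := by exact_mod_cast h2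
      have hd : (m:ℤ) ∣ ((k.val:ℤ) - (j.val:ℤ)) := ⟨N, by rw [h4]; ring⟩
      have h5 : (k.val:ℤ) - (j.val:ℤ) = 0 := by
        refine Int.eq_zero_of_dvd_of_natAbs_lt_natAbs hd ?_
        have : j.val ≠ k.val := fun h => hjk (Fin.ext h)
        simp only [Int.natAbs_natCast]
        omega
      exact hjk (Fin.ext (by omega))
    have hzm : z ^ m = 1 := by
      rw [hz, ← Complex.exp_nat_mul, Complex.exp_eq_one_iff]
      refine ⟨(k.val:ℤ) - (j.val:ℤ), ?_⟩
      push_cast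
      field_simp
    rw [geom_sum_eq hz1, hzm]
    simp

private lemma exp_diff (n : ℕ) (a j k : Fin n) :
    (starRingEnd ℂ) (Complex.exp (-2 * (Real.pi : ℂ) * Complex.I * ((a.val:ℂ) * (j.val:ℂ)) / (n:ℂ))) *
      Complex.exp (-2 * (Real.pi : ℂ) * Complex.I * ((a.val:ℂ) * (k.val:ℂ)) / (n:ℂ))
    = Complex.exp (2 * (Real.pi : ℂ) * Complex.I * ((a.val:ℂ) * (((j - k : Fin n).val : ℂ))) / (n:ℂ)) := by
  have hn : 0 < n := a.pos
  have hn' : (n:ℂ) ≠ 0 := Nat.cast_ne_zero.2 hn.ne'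
  have hsub : (j - k : Fin n).val = (n - k.val + j.val) % n := by
    rw [Fin.sub_def]
  set dd := (j - k : Fin n).val with hdd
  set q := (n - k.val + j.val) / n with hq
  have hdm : n - k.val + j.val = n * q + dd := by
    rw [hsub, hq]
    exact (Nat.div_add_mod _ n).symm
  have hint : (j.val:ℤ) = (k.val:ℤ) + (dd:ℤ) + ((q:ℤ) - 1) * n := by
    have hk := k.isLt
    have hcast : ((n:ℤ) - (k.val:ℤ)) + (j.val:ℤ) = (n:ℤ) * q + dd := by
      have := congrArg (fun x : ℕ => (x : ℤ)) hdm
      push_cast [Nat.cast_sub hk.le] at this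
      push_cast
      linarith
    linear_combination hcast
  have hC : ((j.val:ℕ):ℂ) = (k.val:ℂ) + (dd:ℂ) + ((q:ℂ) - 1) * n := by
    exact_mod_cast congrArg (fun x : ℤ => (x : ℂ)) hint
  rw [← Complex.exp_conj, ← Complex.exp_add]
  refine Complex.exp_eq_exp_iff_exists_int.mpr ⟨(a.val:ℤ) * ((q:ℤ) - 1), ?_⟩
  simp only [map_div₀, _root_.map_mul, map_neg, map_ofNat, Complex.conj_I,
    Complex.conj_ofReal, map_natCast]
  rw [hC]
  field_simp
  push_cast
  ring

private lemma diag_circ (n : ℕ) (d : Fin n → ℂ) :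
    ∃ q : Fin n → ℂ, (1/(n:ℂ)) • ((dftMatrix n)ᴴ * (Matrix.diagonal d * dftMatrix n))
      = Matrix.circulant q := by
  refine ⟨fun e => (1/(n:ℂ)) * ∑ a : Fin n,
    d a * Complex.exp (2 * (Real.pi : ℂ) * Complex.I * ((a.val:ℂ) * ((e.val:ℕ):ℂ)) / (n:ℂ)), ?_⟩
  ext j k
  simp only [Matrix.smul_apply, Matrix.circulant_apply, smul_eq_mul]
  rw [Matrix.mul_apply]
  congr 1
  refine Finset.sum_congr rfl fun a _ => ?_
  rw [Matrix.diagonal_mul, Matrix.conjTranspose_apply]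
  show star (dftMatrix n a j) * (d a * dftMatrix n a k) = _
  simp only [dftMatrix, Matrix.of_apply, RCLike.star_def]
  rw [← exp_diff n a j k]
  ring

private lemma selD_diag (n m μ : ℕ) :
    ∃ dvec : Fin n → ℂ, (selD n m μ)ᵀ * selD n m μ = Matrix.diagonal dvec := by
  refine ⟨fun k => ((selD n m μ)ᵀ * selD n m μ) k k, ?_⟩
  ext k l
  by_cases hkl : k = l
  · subst hkl
    rw [Matrix.diagonal_apply_eq]
  · rw [Matrix.diagonal_apply_ne _ hkl]
    simp only [Matrix.mul_apply, Matrix.transpose_apply, selD, Matrix.of_apply]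
    refine Finset.sum_eq_zero fun i _ => ?_
    split_ifs with h1 h2
    · exfalso
      apply hkl
      apply Fin.ext
      rcases h1 with ⟨hi, hk⟩ | ⟨hi, hk⟩ <;> rcases h2 with ⟨hi', hl⟩ | ⟨hi', hl⟩ <;> omega
    all_goals simp

private lemma Q_circ (n m μ : ℕ) (hn : 0 < n) (hm : 0 < m) :
    ∃ q : Fin n → ℂ, fpoolInv n m μ * fpool n m μ = Matrix.circulant q := by
  have hm' : (m:ℂ) ≠ 0 := Nat.cast_ne_zero.2 hm.ne'
  have hn' : (n:ℂ) ≠ 0 := Nat.cast_ne_zero.2 hn.ne'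
  obtain ⟨dv, hdv⟩ := selD_diag n m μ
  obtain ⟨q, hq⟩ := diag_circ n dv
  refine ⟨q, ?_⟩
  rw [← hq]
  have step1 : fpoolInv n m μ * fpool n m μ
      = ((1/(m:ℂ)) * (1/(n:ℂ))) • ((dftMatrix n)ᴴ *
          ((selD n m μ)ᵀ * ((dftMatrix m * (dftMatrix m)ᴴ) * (selD n m μ * dftMatrix n)))) := by
    unfold fpoolInv fpool
    rw [Matrix.smul_mul, Matrix.mul_smul, smul_smul]
    congr 1
    simp only [Matrix.mul_assoc]
  rw [step1, dft_mul_conjT_s17 m hm, Matrix.smul_mul, Matrix.one_mul, Matrix.mul_smul,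
    Matrix.mul_smul, smul_smul]
  have hsc : (1/(m:ℂ)) * (1/(n:ℂ)) * (m:ℂ) = 1/(n:ℂ) := by
    field_simp
  rw [hsc]
  congr 1
  rw [← Matrix.mul_assoc ((selD n m μ)ᵀ) (selD n m μ) (dftMatrix n), hdv]

private lemma circ_ind_mul {n : ℕ} [NeZero n] (tf : Fin n)
    (Y : Matrix (Fin n) (Fin n) ℂ) (j k : Fin n) :
    (Matrix.circulant (fun e => if e = tf then (1:ℂ) else 0) * Y) j k = Y (j - tf) k := by
  rw [Matrix.mul_apply, Finset.sum_eq_single (j - tf)]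
  · rw [Matrix.circulant_apply, sub_sub_cancel, if_pos rfl, one_mul]
  · intro l _ hl
    rw [Matrix.circulant_apply, if_neg, zero_mul]
    intro h
    apply hl
    have h2 : j - l = j - (j - tf) := by rw [sub_sub_cancel, h]
    exact sub_right_injective h2
  · intro h
    exact absurd (Finset.mem_univ _) h

private lemma mul_circ_ind {n : ℕ} [NeZero n] (tf : Fin n)
    (Y : Matrix (Fin n) (Fin n) ℂ) (j k : Fin n) :
    (Y * (Matrix.circulant (fun e => if e = tf then (1:ℂ) else 0))ᵀ) j k = Y j (k - tf) := by
  rw [Matrix.mul_apply, Finset.sum_eq_single (k - tf)]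
  · rw [Matrix.transpose_apply, Matrix.circulant_apply, sub_sub_cancel, if_pos rfl, mul_one]
  · intro p _ hp
    rw [Matrix.transpose_apply, Matrix.circulant_apply, if_neg, mul_zero]
    intro h
    apply hp
    have h2 : k - p = k - (k - tf) := by rw [sub_sub_cancel, h]
    exact sub_right_injective h2
  · intro h
    exact absurd (Finset.mem_univ _) h

end Aux

/-- 2D F-pooling (applied as two 1D F-poolings Y = P X Pᵀ, reconstructed as
P̄ Y P̄ᵀ) is shift-equivalent. -/
theorem stmt_17 (n m μ : ℕ) (hn : 0 < n) (hm : 0 < m) (hmμ : m = 2 * μ) (hmn : m < n)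
    (X : Matrix (Fin n) (Fin n) ℂ) (t₁ t₂ : ℤ) :
    fpoolInv n m μ * (fpool n m μ * shift2 t₁ t₂ X * (fpool n m μ)ᵀ) * (fpoolInv n m μ)ᵀ =
      shift2 t₁ t₂ (fpoolInv n m μ * (fpool n m μ * X * (fpool n m μ)ᵀ) * (fpoolInv n m μ)ᵀ) := by
  haveI : NeZero n := ⟨hn.ne'⟩
  obtain ⟨q, hQ⟩ := Q_circ n m μ hn hm
  set A := fpoolInv n m μ
  set B := fpool n m μ
  set Q := A * B with hQdef
  -- shift matrices
  have hfin : ∀ t : ℤ, ((t % (n:ℤ)).toNat) < n := by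
    intro t
    have h2 : t % (n:ℤ) < (n:ℤ) := Int.emod_lt_of_pos _ (by exact_mod_cast hn)
    have h1 : 0 ≤ t % (n:ℤ) := Int.emod_nonneg _ (by positivity)
    omega
  set tf₁ : Fin n := ⟨(t₁ % (n:ℤ)).toNat, hfin t₁⟩ with htf₁
  set tf₂ : Fin n := ⟨(t₂ % (n:ℤ)).toNat, hfin t₂⟩ with htf₂
  set S₁ := Matrix.circulant (fun e : Fin n => if e = tf₁ then (1:ℂ) else 0) with hS₁
  set S₂ := Matrix.circulant (fun e : Fin n => if e = tf₂ then (1:ℂ) else 0) with hS₂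
  have hval : ∀ (t : ℤ) (ht : ((t % (n:ℤ)).toNat) < n) (j : Fin n),
      (j - (⟨(t % (n:ℤ)).toNat, ht⟩ : Fin n)).val = (((j.val:ℤ) - t) % (n:ℤ)).toNat := by
    intro t ht j
    rw [Fin.sub_def]
    exact (idx_eq' n j.val _ t j.isLt ht
      (Int.toNat_of_nonneg (Int.emod_nonneg _ (by positivity))).symm).symm
  have hshift : ∀ Y : Matrix (Fin n) (Fin n) ℂ, shift2 t₁ t₂ Y = S₁ * Y * S₂ᵀ := by
    intro Y
    ext j k
    rw [hS₁, hS₂, Matrix.mul_assoc]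
    have e1 : (Matrix.circulant (fun e : Fin n => if e = tf₁ then (1:ℂ) else 0) *
        (Y * (Matrix.circulant (fun e : Fin n => if e = tf₂ then (1:ℂ) else 0))ᵀ)) j k
        = Y (j - tf₁) (k - tf₂) := by
      rw [circ_ind_mul, mul_circ_ind]
    rw [e1]
    show Y _ _ = Y _ _
    congr 1
    · refine Fin.ext ?_
      exact (hval t₁ (hfin t₁) j).symm
    · refine Fin.ext ?_
      exact (hval t₂ (hfin t₂) k).symm
  have key : ∀ Y : Matrix (Fin n) (Fin n) ℂ, A * (B * Y * Bᵀ) * Aᵀ = Q * Y * Qᵀ := by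
    intro Y
    rw [hQdef]
    simp only [Matrix.transpose_mul, Matrix.mul_assoc]
  rw [key, key, hshift, hshift]
  -- now: Q * (S₁ * X * S₂ᵀ) * Qᵀ = S₁ * (Q * X * Qᵀ) * S₂ᵀ
  have hQT : Qᵀ = Matrix.circulant fun i => q (-i) := by
    rw [hQ, Matrix.Fin.transpose_circulant]
  have hS₂T : S₂ᵀ = Matrix.circulant fun i => if -i = tf₂ then (1:ℂ) else 0 := by
    rw [hS₂, Matrix.Fin.transpose_circulant]
  have comm1 : Q * S₁ = S₁ * Q := by
    rw [hQ, hS₁]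
    exact Matrix.Fin.circulant_mul_comm _ _
  have comm2 : S₂ᵀ * Qᵀ = Qᵀ * S₂ᵀ := by
    rw [hQT, hS₂T]
    exact Matrix.Fin.circulant_mul_comm _ _
  calc Q * (S₁ * X * S₂ᵀ) * Qᵀ
      = (Q * S₁) * X * (S₂ᵀ * Qᵀ) := by simp only [Matrix.mul_assoc]
    _ = (S₁ * Q) * X * (Qᵀ * S₂ᵀ) := by rw [comm1, comm2]
    _ = S₁ * (Q * X * Qᵀ) * S₂ᵀ := by simp only [Matrix.mul_assoc]
end
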